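/- Soundness of PRHL: if the partial reverse Hoare triple [P] C [Q] is provable in the proof system PRHL, then it is valid. -/

import Mathlib

namespace RevHoare

/-! ### States -/

abbrev Var := ℕ
abbrev State := Var → ℕ

/-- state update `σ[x ↦ c]`. -/
def upd (σ : State) (x : Var) (c : ℕ) : State := fun y => if y = x then c else σ y

/-! ### Expressions -/

inductive Expr : Type where
  | var : Var → Expr
  | const : ℕ → Expr
  | app : {k : ℕ} → ((Fin k → ℕ) → ℕ) → (Fin k → Expr) → Expr

namespace Expr

/-- `⟦E⟧σ`. -/
def eval : Expr → State → ℕ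
  | var x, σ => σ x
  | const n, _ => n
  | app f es, σ => f fun i => (es i).eval σ

/-- `E[x := E']` (substitution of `E'` for `x` in the last argument). -/
def subst (x : Var) (E' : Expr) : Expr → Expr
  | var y => if y = x then E' else var y
  | const n => const n
  | app f es => app f fun i => subst x E' (es i)

/-- variables occurring in an expression. -/
def fv : Expr → Finset Var
  | var y => {y}
  | const _ => ∅
  | app _ es => Finset.univ.biUnion fun i => (es i).fv

end Expr

/-! ### Boolean conditions -/

inductive BExpr : Type where
  | rel : {k : ℕ} → ((Fin k → ℕ) → Prop) → (Fin k → Expr) → BExpr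
  | eq : Expr → Expr → BExpr
  | le : Expr → Expr → BExpr
  | not : BExpr → BExpr
  | and : BExpr → BExpr → BExpr
  | or : BExpr → BExpr → BExpr

namespace BExpr

/-- `B.holds σ` means `⟦B⟧σ = ⊤`; `¬ B.holds σ` means `⟦B⟧σ = ⊥`. -/
def holds : BExpr → State → Prop
  | rel R es, σ => R fun i => (es i).eval σ
  | eq E₁ E₂, σ => E₁.eval σ = E₂.eval σ
  | le E₁ E₂, σ => E₁.eval σ ≤ E₂.eval σ
  | not B, σ => ¬ holds B σ
  | and B₁ B₂, σ => holds B₁ σ ∧ holds B₂ σ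
  | or B₁ B₂, σ => holds B₁ σ ∨ holds B₂ σ

/-- `B[x := E]`. -/
def subst (x : Var) (E : Expr) : BExpr → BExpr
  | rel R es => rel R fun i => Expr.subst x E (es i)
  | eq E₁ E₂ => eq (Expr.subst x E E₁) (Expr.subst x E E₂)
  | le E₁ E₂ => le (Expr.subst x E E₁) (Expr.subst x E E₂)
  | not B => not (subst x E B)
  | and B₁ B₂ => and (subst x E B₁) (subst x E B₂)
  | or B₁ B₂ => or (subst x E B₁) (subst x E B₂)

/-- variables occurring in a Boolean condition. -/
def vars : BExpr → Finset Var
  | rel _ es => Finset.univ.biUnion fun i => (es i).fv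
  | eq E₁ E₂ => E₁.fv ∪ E₂.fv
  | le E₁ E₂ => E₁.fv ∪ E₂.fv
  | not B => vars B
  | and B₁ B₂ => vars B₁ ∪ vars B₂
  | or B₁ B₂ => vars B₁ ∪ vars B₂

end BExpr

/-! ### Assertions -/

inductive Assertion : Type where
  | base : BExpr → Assertion
  | not : Assertion → Assertion
  | or : Assertion → Assertion → Assertion
  | and : Assertion → Assertion → Assertion
  | imp : Assertion → Assertion → Assertion
  | ex : Var → Assertion → Assertion
  | all : Var → Assertion → Assertion

namespace Assertion

/-- `P.sat σ` means `σ ⊨ P`. -/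
def sat : Assertion → State → Prop
  | base B, σ => B.holds σ
  | not P, σ => ¬ sat P σ
  | or P Q, σ => sat P σ ∨ sat Q σ
  | and P Q, σ => sat P σ ∧ sat Q σ
  | imp P Q, σ => sat P σ → sat Q σ
  | ex x P, σ => ∃ c : ℕ, sat P (upd σ x c)
  | all x P, σ => ∀ c : ℕ, sat P (upd σ x c)

/-- all variables occurring in `P` (free or bound, including binders). -/
def allVars : Assertion → Finset Var
  | base B => B.vars
  | not P => allVars P
  | or P Q => allVars P ∪ allVars Q
  | and P Q => allVars P ∪ allVars Q
  | imp P Q => allVars P ∪ allVars Q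
  | ex y P => insert y (allVars P)
  | all y P => insert y (allVars P)

/-- naive renaming of the free occurrences of the variable `x` to the variable `z`. -/
def rename (x z : Var) : Assertion → Assertion
  | base B => base (B.subst x (Expr.var z))
  | not P => not (rename x z P)
  | or P Q => or (rename x z P) (rename x z Q)
  | and P Q => and (rename x z P) (rename x z Q)
  | imp P Q => imp (rename x z P) (rename x z Q)
  | ex y P => if y = x then ex y P else ex y (rename x z P)
  | all y P => if y = x then all y P else all y (rename x z P)

/-- size (number of assertion constructors). -/
def asize : Assertion → ℕ
  | base _ => 1
  | not P => asize P + 1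
  | or P Q => asize P + asize Q + 1
  | and P Q => asize P + asize Q + 1
  | imp P Q => asize P + asize Q + 1
  | ex _ P => asize P + 1
  | all _ P => asize P + 1

theorem asize_rename (x z : Var) : ∀ P : Assertion, (rename x z P).asize = P.asize := by
  intro P
  induction P with
  | base B => rfl
  | not P ih => simp [rename, asize, ih]
  | or P Q ih1 ih2 => simp [rename, asize, ih1, ih2]
  | and P Q ih1 ih2 => simp [rename, asize, ih1, ih2]
  | imp P Q ih1 ih2 => simp [rename, asize, ih1, ih2]
  | ex y P ih => by_cases h : y = x <;> simp [rename, asize, h, ih]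
  | all y P ih => by_cases h : y = x <;> simp [rename, asize, h, ih]

/-- a variable not belonging to the finite set `s`. -/
def fresh (s : Finset Var) : Var := s.sup id + 1

/-- capture-avoiding substitution `P[x := E]` (bound variables are renamed afresh). -/
def subst (x : Var) (E : Expr) : Assertion → Assertion
  | base B => base (B.subst x E)
  | not P => not (subst x E P)
  | or P Q => or (subst x E P) (subst x E Q)
  | and P Q => and (subst x E P) (subst x E Q)
  | imp P Q => imp (subst x E P) (subst x E Q)
  | ex y P =>
      let z := fresh (E.fv ∪ insert x (allVars P))
      ex z (subst x E (rename y z P))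
  | all y P =>
      let z := fresh (E.fv ∪ insert x (allVars P))
      all z (subst x E (rename y z P))
termination_by P => P.asize
decreasing_by all_goals simp [asize, asize_rename] <;> omega

end Assertion

/-- semantic entailment `P ⊨ Q` between assertions. -/
def entails (P Q : Assertion) : Prop := ∀ σ : State, P.sat σ → Q.sat σ

/-! ### Programs and small-step semantics -/

/-- non-empty commands `C'` of the grammar. -/
inductive Cmd : Type where
  | assign : Var → Expr → Cmd
  | seq : Cmd → Cmd → Cmd
  | while : BExpr → Option Cmd → Cmd
  | choice : Option Cmd → Option Cmd → Cmd

/-- programs: `none` is the empty program ε, giving the grammar `C ::= ε | C'`. -/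
abbrev Prog := Option Cmd

/-- sequential composition `C₀;C₁` of programs, identifying `ε;C` and `C;ε` with `C`. -/
def Prog.comp : Prog → Prog → Prog
  | none, C => C
  | some c, none => some c
  | some c₀, some c₁ => some (Cmd.seq c₀ c₁)

mutual
/-- variables occurring in a (non-empty) command. -/
def Cmd.vars : Cmd → Finset Var
  | .assign x E => insert x E.fv
  | .seq c₀ c₁ => c₀.vars ∪ c₁.vars
  | .while B C => B.vars ∪ progVars C
  | .choice C₀ C₁ => progVars C₀ ∪ progVars C₁
/-- variables occurring in a program. -/
def progVars : Prog → Finset Var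
  | none => ∅
  | some c => c.vars
end

/-- the small-step relation `⟨C,σ⟩ → ⟨C',σ'⟩` on configurations. -/
inductive Step : Prog × State → Prog × State → Prop where
  | assign {x E σ} : Step (some (.assign x E), σ) (none, upd σ x (E.eval σ))
  | whileTrue {B C σ} : B.holds σ →
      Step (some (.while B C), σ) (Prog.comp C (some (.while B C)), σ)
  | whileFalse {B C σ} : ¬ B.holds σ → Step (some (.while B C), σ) (none, σ)
  | seq {c₀ c₁ σ C₀' σ'} : Step (some c₀, σ) (C₀', σ') →
      Step (some (.seq c₀ c₁), σ) (Prog.comp C₀' (some c₁), σ')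
  | choiceL {C₀ C₁ σ} : Step (some (.choice C₀ C₁), σ) (C₀, σ)
  | choiceR {C₀ C₁ σ} : Step (some (.choice C₀ C₁), σ) (C₁, σ)

/-- `→*`, the reflexive-transitive closure of `→`. -/
def Steps : Prog × State → Prog × State → Prop := Relation.ReflTransGen Step

/-- `→ⁿ`, an `n`-step execution. -/
inductive StepN : ℕ → Prog × State → Prog × State → Prop where
  | refl (c) : StepN 0 c c
  | step {c c' c'' n} : Step c c' → StepN n c' c'' → StepN (n + 1) c c''

/-! ### Partial reverse Hoare triples -/

/-- validity of the partial reverse Hoare triple `[P] C [Q]`. -/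
def Valid (P : Assertion) (C : Prog) (Q : Assertion) : Prop :=
  ∀ σ σ' : State, Q.sat σ' → Steps (C, σ) (none, σ') → P.sat σ

/-- the weakest pre-condition set `WPR(C,Q)`. -/
def WPR (C : Prog) (Q : Assertion) : Set State :=
  {σ | ∃ σ', Steps (C, σ) (none, σ') ∧ Q.sat σ'}

/-! ### The ordinary proof system PRHL -/

/-- provability in the ordinary proof system `PRHL`. -/
inductive PRHL : Assertion → Prog → Assertion → Prop where
  | ax (Q) : PRHL Q none Q
  | assign (Q x E) : PRHL (Q.subst x E) (some (.assign x E)) Q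
  | seq {P R Q C₀ C₁} : PRHL P C₀ R → PRHL R C₁ Q → PRHL P (Prog.comp C₀ C₁) Q
  | cons {P P' Q Q' C} : PRHL P C Q → entails P P' → entails Q' Q → PRHL P' C Q'
  | or {P Q C₀ C₁} : PRHL P C₀ Q → PRHL P C₁ Q → PRHL P (some (.choice C₀ C₁)) Q
  | whileR {P B C} : PRHL ((Assertion.base B).imp P) C P →
      PRHL P (some (.while B C)) ((Assertion.not (.base B)).imp P)

/-! ### The cyclic proof system CPRHL -/

/-- a partial reverse Hoare triple `[pre] prog [post]`. -/
structure Triple : Type where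
  pre : Assertion
  prog : Prog
  post : Assertion

/-- one application of a CPRHL rule other than (Cons): conclusion and its list of premises. -/
inductive CRule : Triple → List Triple → Prop where
  | ax (Q) : CRule ⟨Q, none, Q⟩ []
  | assign (P Q x E C) :
      CRule ⟨P.subst x E, Prog.comp (some (.assign x E)) C, Q⟩ [⟨P, C, Q⟩]
  | or (P Q C₀ C₁ C) :
      CRule ⟨P, Prog.comp (some (.choice C₀ C₁)) C, Q⟩
        [⟨P, Prog.comp C₀ C, Q⟩, ⟨P, Prog.comp C₁ C, Q⟩]
  | whileR (P Q B C C') :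
      CRule ⟨P, Prog.comp (some (.while B C)) C', Q⟩
        [⟨(Assertion.not (.base B)).imp P, C', Q⟩,
         ⟨(Assertion.base B).imp P, Prog.comp C (Prog.comp (some (.while B C)) C'), Q⟩]

/-- one application of the CPRHL rule (Cons): conclusion `t` from premise `t'`. -/
def ConsRule (t t' : Triple) : Prop :=
  t.prog = t'.prog ∧ entails t'.pre t.pre ∧ entails t.post t'.post

/-- A `CPRHL` pre-proof (with open leaves), presented as a finite proof graph:
back-link leaves are identified with their companions, which carry the same label.
`isOpen v = true` marks the proper open leaves, which carry no rule.
At every other node either the rule (Cons) (when `isCons v = true`) or one of the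
remaining rules is applied, whose premises are the labels of the children. -/
structure CPreProof : Type where
  size : ℕ
  root : Fin size
  label : Fin size → Triple
  isOpen : Fin size → Bool
  isCons : Fin size → Bool
  children : Fin size → List (Fin size)
  open_ok : ∀ v, isOpen v = true → children v = []
  cons_ok : ∀ v, isOpen v = false → isCons v = true →
      ∃ w, children v = [w] ∧ ConsRule (label v) (label w)
  rule_ok : ∀ v, isOpen v = false → isCons v = false →
      CRule (label v) ((children v).map label)

/-- the global soundness condition: along every infinite path (in the tree unfolding
induced by the back-links), rules other than (Cons) are applied infinitely often. -/
def CPreProof.GlobalSound (D : CPreProof) : Prop :=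
  ∀ f : ℕ → Fin D.size, (∀ i, f (i + 1) ∈ D.children (f i)) →
    ∀ N, ∃ i, N ≤ i ∧ D.isCons (f i) = false

/-- provability in the cyclic proof system `CPRHL`: there is a CPRHL proof
(a globally sound pre-proof without proper open leaves) of the given triple. -/
def CProvable (t : Triple) : Prop :=
  ∃ D : CPreProof, D.GlobalSound ∧ D.label D.root = t ∧ ∀ v, D.isOpen v = false


/-! ### Auxiliary lemmas for soundness -/

section SoundAux

lemma upd_self (σ : State) (x : Var) (c d : ℕ) : upd (upd σ x c) x d = upd σ x d := by
  funext y; simp only [upd]; split <;> rfl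

lemma upd_comm (σ : State) {x y : Var} (h : x ≠ y) (c d : ℕ) :
    upd (upd σ x c) y d = upd (upd σ y d) x c := by
  funext w; simp only [upd]
  by_cases h1 : w = y <;> by_cases h2 : w = x <;> simp_all

lemma eval_subst (x : Var) (E' : Expr) : ∀ (e : Expr) (σ : State),
    (Expr.subst x E' e).eval σ = e.eval (upd σ x (E'.eval σ)) := by
  intro e
  induction e with
  | var y => intro σ; by_cases h : y = x <;> simp [Expr.subst, Expr.eval, upd, h]
  | const n => intro σ; rfl
  | app f es ih =>
      intro σ; simp only [Expr.subst, Expr.eval]; congr 1; funext i; exact ih i σ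

lemma eval_congr : ∀ (e : Expr) {σ σ' : State},
    (∀ w ∈ e.fv, σ w = σ' w) → e.eval σ = e.eval σ' := by
  intro e
  induction e with
  | var y => intro σ σ' h; exact h y (by simp [Expr.fv])
  | const n => intro _ _ _; rfl
  | app f es ih =>
      intro σ σ' h; simp only [Expr.eval]; congr 1; funext i
      exact ih i fun w hw => h w (by simp [Expr.fv]; exact ⟨i, hw⟩)

lemma holds_subst (x : Var) (E : Expr) : ∀ (B : BExpr) (σ : State),
    (BExpr.subst x E B).holds σ ↔ B.holds (upd σ x (E.eval σ)) := by
  intro B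
  induction B <;> intro σ <;>
    simp [BExpr.subst, BExpr.holds, eval_subst, *]

lemma holds_congr : ∀ (B : BExpr) {σ σ' : State},
    (∀ w ∈ B.vars, σ w = σ' w) → (B.holds σ ↔ B.holds σ') := by
  intro B
  induction B with
  | rel R es =>
      intro σ σ' h; simp only [BExpr.holds]
      have : (fun i => (es i).eval σ) = fun i => (es i).eval σ' := by
        funext i; exact eval_congr _ fun w hw => h w (by simp [BExpr.vars]; exact ⟨i, hw⟩)
      rw [this]
  | eq E₁ E₂ =>
      intro σ σ' h; simp only [BExpr.holds]
      rw [eval_congr E₁ fun w hw => h w (by simp [BExpr.vars, hw]),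
        eval_congr E₂ fun w hw => h w (by simp [BExpr.vars, hw])]
  | le E₁ E₂ =>
      intro σ σ' h; simp only [BExpr.holds]
      rw [eval_congr E₁ fun w hw => h w (by simp [BExpr.vars, hw]),
        eval_congr E₂ fun w hw => h w (by simp [BExpr.vars, hw])]
  | not B ih =>
      intro σ σ' h; simp only [BExpr.holds]
      rw [ih fun w hw => h w (by simpa [BExpr.vars] using hw)]
  | and B₁ B₂ ih₁ ih₂ =>
      intro σ σ' h; simp only [BExpr.holds]
      rw [ih₁ fun w hw => h w (by simp [BExpr.vars, hw]),
        ih₂ fun w hw => h w (by simp [BExpr.vars, hw])]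
  | or B₁ B₂ ih₁ ih₂ =>
      intro σ σ' h; simp only [BExpr.holds]
      rw [ih₁ fun w hw => h w (by simp [BExpr.vars, hw]),
        ih₂ fun w hw => h w (by simp [BExpr.vars, hw])]

lemma sat_congr : ∀ (P : Assertion) {σ σ' : State},
    (∀ w ∈ P.allVars, σ w = σ' w) → (P.sat σ ↔ P.sat σ') := by
  intro P
  induction P with
  | base B => intro σ σ' h; exact holds_congr B h
  | not P ih =>
      intro σ σ' h; simp only [Assertion.sat]
      rw [ih fun w hw => h w (by simpa [Assertion.allVars] using hw)]
  | or P Q ihP ihQ =>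
      intro σ σ' h; simp only [Assertion.sat]
      rw [ihP fun w hw => h w (by simp [Assertion.allVars, hw]),
        ihQ fun w hw => h w (by simp [Assertion.allVars, hw])]
  | and P Q ihP ihQ =>
      intro σ σ' h; simp only [Assertion.sat]
      rw [ihP fun w hw => h w (by simp [Assertion.allVars, hw]),
        ihQ fun w hw => h w (by simp [Assertion.allVars, hw])]
  | imp P Q ihP ihQ =>
      intro σ σ' h; simp only [Assertion.sat]
      rw [ihP fun w hw => h w (by simp [Assertion.allVars, hw]),
        ihQ fun w hw => h w (by simp [Assertion.allVars, hw])]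
  | ex y P ih =>
      intro σ σ' h; simp only [Assertion.sat]
      refine exists_congr fun c => ih fun w hw => ?_
      by_cases hwy : w = y
      · simp [upd, hwy]
      · simp [upd, hwy]; exact h w (by simp [Assertion.allVars, hw])
  | all y P ih =>
      intro σ σ' h; simp only [Assertion.sat]
      refine forall_congr' fun c => ih fun w hw => ?_
      by_cases hwy : w = y
      · simp [upd, hwy]
      · simp [upd, hwy]; exact h w (by simp [Assertion.allVars, hw])

lemma fresh_not_mem (s : Finset Var) : Assertion.fresh s ∉ s := by
  intro h
  have h2 : s.sup id + 1 ≤ s.sup id := Finset.le_sup (f := id) h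
  exact Nat.not_succ_le_self _ h2

lemma sat_rename (x z : Var) : ∀ (P : Assertion), z ∉ P.allVars → ∀ σ : State,
    (P.rename x z).sat σ ↔ P.sat (upd σ x (σ z)) := by
  intro P
  induction P with
  | base B =>
      intro _ σ
      simpa [Assertion.rename, Assertion.sat, Expr.eval] using holds_subst x (Expr.var z) B σ
  | not P ih =>
      intro hz σ
      simp only [Assertion.rename, Assertion.sat]
      rw [ih (by simpa [Assertion.allVars] using hz)]
  | or P Q ihP ihQ =>
      intro hz σ
      simp only [Assertion.allVars, Finset.mem_union, not_or] at hz
      simp only [Assertion.rename, Assertion.sat]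
      rw [ihP hz.1, ihQ hz.2]
  | and P Q ihP ihQ =>
      intro hz σ
      simp only [Assertion.allVars, Finset.mem_union, not_or] at hz
      simp only [Assertion.rename, Assertion.sat]
      rw [ihP hz.1, ihQ hz.2]
  | imp P Q ihP ihQ =>
      intro hz σ
      simp only [Assertion.allVars, Finset.mem_union, not_or] at hz
      simp only [Assertion.rename, Assertion.sat]
      rw [ihP hz.1, ihQ hz.2]
  | ex y P ih =>
      intro hz σ
      simp only [Assertion.allVars, Finset.mem_insert, not_or] at hz
      obtain ⟨hzy, hzP⟩ := hz
      by_cases hyx : y = x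
      · subst hyx
        simp only [Assertion.rename, if_pos rfl, Assertion.sat]
        refine exists_congr fun c => ?_
        rw [upd_self]
      · simp only [Assertion.rename, if_neg hyx, Assertion.sat]
        refine exists_congr fun c => ?_
        rw [ih hzP]
        have h1 : (upd σ y c) z = σ z := by simp [upd, hzy]
        rw [h1, upd_comm σ hyx c (σ z)]
  | all y P ih =>
      intro hz σ
      simp only [Assertion.allVars, Finset.mem_insert, not_or] at hz
      obtain ⟨hzy, hzP⟩ := hz
      by_cases hyx : y = x
      · subst hyx
        simp only [Assertion.rename, if_pos rfl, Assertion.sat]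
        refine forall_congr' fun c => ?_
        rw [upd_self]
      · simp only [Assertion.rename, if_neg hyx, Assertion.sat]
        refine forall_congr' fun c => ?_
        rw [ih hzP]
        have h1 : (upd σ y c) z = σ z := by simp [upd, hzy]
        rw [h1, upd_comm σ hyx c (σ z)]

theorem sat_subst (x : Var) (E : Expr) (P : Assertion) (σ : State) :
    (Assertion.subst x E P).sat σ ↔ P.sat (upd σ x (E.eval σ)) := by
  match P with
  | .base B => simpa [Assertion.subst, Assertion.sat] using holds_subst x E B σ
  | .not P =>
      simp only [Assertion.subst, Assertion.sat]
      rw [sat_subst x E P σ]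
  | .or P Q =>
      simp only [Assertion.subst, Assertion.sat]
      rw [sat_subst x E P σ, sat_subst x E Q σ]
  | .and P Q =>
      simp only [Assertion.subst, Assertion.sat]
      rw [sat_subst x E P σ, sat_subst x E Q σ]
  | .imp P Q =>
      simp only [Assertion.subst, Assertion.sat]
      rw [sat_subst x E P σ, sat_subst x E Q σ]
  | .ex y P =>
      rw [Assertion.subst]
      set z := Assertion.fresh (E.fv ∪ insert x P.allVars) with hzdef
      have hzmem : z ∉ E.fv ∪ insert x P.allVars := fresh_not_mem _
      simp only [Finset.mem_union, Finset.mem_insert, not_or] at hzmem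
      obtain ⟨hzE, hzx, hzP⟩ := hzmem
      have hzP' : z ∉ (P.rename y z).allVars ∨ True := Or.inr trivial
      simp only [Assertion.sat]
      refine exists_congr fun c => ?_
      rw [sat_subst x E (P.rename y z) (upd σ z c)]
      have hE : E.eval (upd σ z c) = E.eval σ := by
        refine eval_congr E fun w hw => ?_
        have hwz : w ≠ z := fun h => hzE (h ▸ hw)
        simp [upd, hwz]
      rw [hE, sat_rename y z P hzP]
      have hτz : (upd (upd σ z c) x (E.eval σ)) z = c := by simp [upd, hzx]
      rw [hτz]
      refine sat_congr P fun w hw => ?_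
      have hwz : w ≠ z := fun h => hzP (h ▸ hw)
      simp [upd, hwz]
  | .all y P =>
      rw [Assertion.subst]
      set z := Assertion.fresh (E.fv ∪ insert x P.allVars) with hzdef
      have hzmem : z ∉ E.fv ∪ insert x P.allVars := fresh_not_mem _
      simp only [Finset.mem_union, Finset.mem_insert, not_or] at hzmem
      obtain ⟨hzE, hzx, hzP⟩ := hzmem
      simp only [Assertion.sat]
      refine forall_congr' fun c => ?_
      rw [sat_subst x E (P.rename y z) (upd σ z c)]
      have hE : E.eval (upd σ z c) = E.eval σ := by
        refine eval_congr E fun w hw => ?_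
        have hwz : w ≠ z := fun h => hzE (h ▸ hw)
        simp [upd, hwz]
      rw [hE, sat_rename y z P hzP]
      have hτz : (upd (upd σ z c) x (E.eval σ)) z = c := by simp [upd, hzx]
      rw [hτz]
      refine sat_congr P fun w hw => ?_
      have hwz : w ≠ z := fun h => hzP (h ▸ hw)
      simp [upd, hwz]
termination_by P.asize
decreasing_by all_goals simp [Assertion.asize, Assertion.asize_rename] <;> omega

/-! ### Semantics lemmas -/

lemma no_step_none {σ : State} {c : Prog × State} (h : Step (none, σ) c) : False := by
  cases h

lemma steps_none {σ : State} {c : Prog × State} (h : Steps (none, σ) c) : c = (none, σ) := by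
  rcases Relation.ReflTransGen.cases_head h with h | ⟨d, hd, _⟩
  · exact h.symm
  · exact absurd hd (fun h => no_step_none h)

lemma stepN_none {n : ℕ} {σ : State} {c : Prog × State}
    (h : StepN n (none, σ) c) : c = (none, σ) := by
  cases h with
  | refl => rfl
  | step hs _ => exact absurd hs (fun h => no_step_none h)

lemma StepN.append {n : ℕ} {c c' c'' : Prog × State}
    (h : StepN n c c') (h' : Step c' c'') : StepN (n + 1) c c'' := by
  induction h with
  | refl => exact .step h' (.refl _)
  | step h1 _ ih => exact .step h1 (ih h')

lemma steps_iff_stepN {c c' : Prog × State} : Steps c c' ↔ ∃ n, StepN n c c' := by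
  constructor
  · intro h
    induction h with
    | refl => exact ⟨0, .refl _⟩
    | tail _ h₂ ih => obtain ⟨n, hn⟩ := ih; exact ⟨n + 1, hn.append h₂⟩
  · rintro ⟨n, hn⟩
    induction hn with
    | refl => exact Relation.ReflTransGen.refl
    | step h1 _ ih => exact Relation.ReflTransGen.head h1 ih

lemma stepN_comp : ∀ (n : ℕ) (C₀ C₁ : Prog) (σ σ'' : State),
    StepN n (Prog.comp C₀ C₁, σ) (none, σ'') →
    ∃ σ' m k, m + k ≤ n ∧ StepN m (C₀, σ) (none, σ') ∧ StepN k (C₁, σ') (none, σ'') := by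
  intro n
  induction n using Nat.strong_induction_on with
  | _ n ih =>
    intro C₀ C₁ σ σ'' h
    match C₀, C₁ with
    | none, C₁ => exact ⟨σ, 0, n, by omega, .refl _, h⟩
    | some c₀, none => exact ⟨σ'', n, 0, by omega, h, .refl _⟩
    | some c₀, some c₁ =>
      cases h with
      | step hs hrest =>
        cases hs with
        | seq hstep =>
          obtain ⟨σ', m, k, hmk, h1, h2⟩ := ih _ (by omega) _ _ _ _ hrest
          exact ⟨σ', m + 1, k, by omega, .step hstep h1, h2⟩

lemma while_aux {P : Assertion} {B : BExpr} {C : Prog}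
    (hC : Valid ((Assertion.base B).imp P) C P) :
    ∀ (n : ℕ) (σ σ'' : State), ((Assertion.not (.base B)).imp P).sat σ'' →
      StepN n (some (.while B C), σ) (none, σ'') → P.sat σ := by
  intro n
  induction n using Nat.strong_induction_on with
  | _ n ih =>
    intro σ σ'' hQ hn
    cases hn with
    | step hs hrest =>
      cases hs with
      | whileTrue hB =>
        obtain ⟨σ', m, k, hmk, h1, h2⟩ := stepN_comp _ _ _ _ _ hrest
        have hPσ' : P.sat σ' := ih k (by omega) σ' σ'' hQ h2
        have := hC σ σ' hPσ' (steps_iff_stepN.mpr ⟨m, h1⟩)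
        exact this hB
      | whileFalse hB =>
        have heq : ((none : Prog), σ'') = ((none : Prog), σ) := stepN_none hrest
        have : σ'' = σ := by injection heq
        subst this
        exact hQ hB

end SoundAux

/-- Soundness of PRHL: if `[P] C [Q]` is provable in the proof system
PRHL, then it is valid. -/
theorem prhl_sound (P Q : Assertion) (C : Prog) (h : PRHL P C Q) :
    Valid P C Q := by
  induction h with
  | ax Q =>
      intro σ σ' hQ hs
      have := steps_none hs
      have hσ : σ' = σ := by injection this
      exact hσ ▸ hQ
  | assign Q x E =>
      intro σ σ' hQ hs
      rcases Relation.ReflTransGen.cases_head hs with h | ⟨d, hd, hrest⟩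
      · exact absurd h (by simp)
      · cases hd
        have := steps_none hrest
        have hσ : σ' = upd σ x (E.eval σ) := by injection this
        rw [sat_subst]
        exact hσ ▸ hQ
  | seq h₀ h₁ ih₀ ih₁ =>
      intro σ σ' hQ hs
      obtain ⟨n, hn⟩ := steps_iff_stepN.mp hs
      obtain ⟨τ, m, k, _, h1, h2⟩ := stepN_comp _ _ _ _ _ hn
      have hR := ih₁ τ σ' hQ (steps_iff_stepN.mpr ⟨k, h2⟩)
      exact ih₀ σ τ hR (steps_iff_stepN.mpr ⟨m, h1⟩)
  | cons h hP hQ ih =>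
      intro σ σ' hq hs
      exact hP σ (ih σ σ' (hQ σ' hq) hs)
  | or h₀ h₁ ih₀ ih₁ =>
      intro σ σ' hQ hs
      rcases Relation.ReflTransGen.cases_head hs with h | ⟨d, hd, hrest⟩
      · exact absurd h (by simp)
      · cases hd with
        | choiceL => exact ih₀ σ σ' hQ hrest
        | choiceR => exact ih₁ σ σ' hQ hrest
  | whileR h ih =>
      intro σ σ' hQ hs
      obtain ⟨n, hn⟩ := steps_iff_stepN.mp hs
      exact while_aux ih n σ σ' hQ hn

end RevHoare
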